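/- arXiv:math/0506253 — 3 statements merged into one kernel-verified Lean document; each statement's English description precedes it below -/
import Mathlib

section
/- Let Δ be a finite simple graph and let S be a subset of its vertex set, with Δ[S] the induced subgraph of Δ on S. Then the group homomorphism G(Δ[S]) → G(Δ) sending each generator of G(Δ[S]) to the corresponding generator of G(Δ) is injective. -/
/-
Sending the generators of `G(Δ)` outside `S` to `1` and those inside `S` to the corresponding
generators of `G(Δ[S])` respects the relators: a commutator of two vertices of `S` adjacent in
`Δ` is a relator of `G(Δ[S])`, and any other one becomes a commutator with `1`. The resulting
retraction `G(Δ) → G(Δ[S])` is a left inverse of `φ`.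
-/

/-- The set of relators of the right-angled Artin group of a simple graph:
commutators of generators corresponding to adjacent vertices. -/
def raagRels {V : Type*} (G : SimpleGraph V) : Set (FreeGroup V) :=
  {r | ∃ a b : V, G.Adj a b ∧
    r = FreeGroup.of a * FreeGroup.of b * (FreeGroup.of a)⁻¹ * (FreeGroup.of b)⁻¹}

/-- The right-angled Artin group of a simple graph. -/
abbrev RAAG {V : Type*} (G : SimpleGraph V) : Type _ :=
  PresentedGroup (raagRels G)

/-- The generator of the right-angled Artin group corresponding to a vertex. -/
def raagGen {V : Type*} (G : SimpleGraph V) (v : V) : RAAG G :=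
  PresentedGroup.of v

namespace RAAG

variable {V : Type*} {G : SimpleGraph V} {H : Type*} [Group H]

theorem commute_raagGen {a b : V} (h : G.Adj a b) : Commute (raagGen G a) (raagGen G b) := by
  have hrel : (FreeGroup.of a * FreeGroup.of b * (FreeGroup.of a)⁻¹ * (FreeGroup.of b)⁻¹ :
      FreeGroup V) ∈ Subgroup.normalClosure (raagRels G) :=
    Subgroup.subset_normalClosure ⟨a, b, h, rfl⟩
  have hcomm : raagGen G a * raagGen G b * (raagGen G a)⁻¹ * (raagGen G b)⁻¹ = 1 :=
    (QuotientGroup.eq_one_iff _).2 hrel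
  rwa [mul_inv_eq_one, mul_inv_eq_iff_eq_mul] at hcomm

def lift (f : V → H) (hf : ∀ a b, G.Adj a b → Commute (f a) (f b)) :
    RAAG G →* H :=
  PresentedGroup.toGroup (rels := raagRels G) (f := f) <| by
    rintro r ⟨a, b, hab, rfl⟩
    simp only [map_mul, map_inv, FreeGroup.lift_apply_of]
    rw [mul_inv_eq_one, mul_inv_eq_iff_eq_mul]
    exact hf a b hab

@[simp]
theorem lift_raagGen (f : V → H)
    (hf : ∀ a b, G.Adj a b → Commute (f a) (f b)) (v : V) : lift f hf (raagGen G v) = f v :=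
  PresentedGroup.toGroup.of _

theorem hom_ext {ψ₁ ψ₂ : RAAG G →* H}
    (h : ∀ v, ψ₁ (raagGen G v) = ψ₂ (raagGen G v)) : ψ₁ = ψ₂ :=
  PresentedGroup.ext h

variable (Δ : SimpleGraph V) (S : Set V)

noncomputable def restrict : RAAG Δ →* RAAG (Δ.induce S) :=
  open Classical in
  lift (fun v => if h : v ∈ S then raagGen (Δ.induce S) ⟨v, h⟩ else 1) <| by
    intro a b hab
    by_cases ha : a ∈ S
    · by_cases hb : b ∈ S
      · simpa only [dif_pos ha, dif_pos hb] using
          commute_raagGen (G := Δ.induce S) (a := ⟨a, ha⟩) (b := ⟨b, hb⟩) hab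
      · simp only [dif_neg hb, Commute.one_right]
    · simp only [dif_neg ha, Commute.one_left]

theorem restrict_raagGen (s : S) :
    restrict Δ S (raagGen Δ s) = raagGen (Δ.induce S) s := by
  simp [restrict]

end RAAG

theorem raag_induce_injective_general {V : Type*} (Δ : SimpleGraph V) (S : Set V)
    (φ : RAAG (Δ.induce S) →* RAAG Δ)
    (hφ : ∀ s : S, φ (raagGen (Δ.induce S) s) = raagGen Δ ↑s) :
    Function.Injective φ := by
  have hretract : (RAAG.restrict Δ S).comp φ = MonoidHom.id _ :=
    RAAG.hom_ext fun s => by simp only [MonoidHom.comp_apply, hφ, RAAG.restrict_raagGen,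
      MonoidHom.id_apply]
  exact Function.LeftInverse.injective (DFunLike.congr_fun hretract)

/-- The homomorphism from the right-angled Artin group of an induced
subgraph `Δ[S]` to that of `Δ`, sending each generator of `G(Δ[S])` to the
corresponding generator of `G(Δ)`, is injective. -/
theorem raag_induce_injective {V : Type*} [Fintype V] (Δ : SimpleGraph V) (S : Set V)
    (φ : RAAG (Δ.induce S) →* RAAG Δ)
    (hφ : ∀ s : S, φ (raagGen (Δ.induce S) s) = raagGen Δ ↑s) :
    Function.Injective φ :=
  raag_induce_injective_general Δ S φ hφ
end

section
/- Let Δ be a finite simple graph with vertex set V and let v ∈ V. Let Δ − v be the induced subgraph of Δ on V ∖ {v}, let link(v) be the set of neighbors of v in Δ, and let L be the subgroup of G(Δ − v) generated by the generators corresponding to the vertices of link(v). Then G(Δ) is isomorphic to the HNN extension of G(Δ − v) with both associated subgroups equal to L and with associated isomorphism the identity map of L. -/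
lemma raagGen_comm {V : Type*} {G : SimpleGraph V} {a b : V} (h : G.Adj a b) :
    raagGen G a * raagGen G b = raagGen G b * raagGen G a := by
  have hr : (FreeGroup.of a * FreeGroup.of b * (FreeGroup.of a)⁻¹ * (FreeGroup.of b)⁻¹ :
      FreeGroup V) ∈ Subgroup.normalClosure (raagRels G) :=
    Subgroup.subset_normalClosure ⟨a, b, h, rfl⟩
  have : (PresentedGroup.mk (raagRels G))
      (FreeGroup.of a * FreeGroup.of b * (FreeGroup.of a)⁻¹ * (FreeGroup.of b)⁻¹) = 1 :=
    (QuotientGroup.eq_one_iff _).2 hr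
  simp only [map_mul, map_inv] at this
  have h2 : (PresentedGroup.mk (raagRels G)) (FreeGroup.of a) *
      (PresentedGroup.mk (raagRels G)) (FreeGroup.of b) *
      ((PresentedGroup.mk (raagRels G)) (FreeGroup.of b) *
        (PresentedGroup.mk (raagRels G)) (FreeGroup.of a))⁻¹ = 1 := by
    rw [mul_inv_rev]
    simpa [mul_assoc] using this
  exact mul_inv_eq_one.mp h2

/-- `G(Δ)` is the HNN extension of `G(Δ − v)` with both associated
subgroups equal to the subgroup `L` generated by the generators corresponding to the
link of `v`, and with associated isomorphism the identity of `L`. -/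
theorem raag_hnn {V : Type*} [Fintype V] (Δ : SimpleGraph V) (v : V) :
    Nonempty (RAAG Δ ≃*
      HNNExtension (RAAG (Δ.induce ({v}ᶜ : Set V)))
        (Subgroup.closure
          (raagGen (Δ.induce ({v}ᶜ : Set V)) '' {u : ({v}ᶜ : Set V) | Δ.Adj v ↑u}))
        (Subgroup.closure
          (raagGen (Δ.induce ({v}ᶜ : Set V)) '' {u : ({v}ᶜ : Set V) | Δ.Adj v ↑u}))
        (MulEquiv.refl _)) := by
  classical
  set W : Set V := ({v}ᶜ : Set V) with hW
  set Δ' := Δ.induce W with hΔ'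
  set L : Subgroup (RAAG Δ') :=
    Subgroup.closure (raagGen Δ' '' {u : W | Δ.Adj v ↑u}) with hL
  -- the backward base map j : RAAG Δ' →* RAAG Δ
  have jrel : ∀ r ∈ raagRels Δ', FreeGroup.lift (fun u : W => raagGen Δ (u : V)) r = 1 := by
    rintro r ⟨a, b, hab, rfl⟩
    have h : Δ.Adj (a : V) (b : V) := hab
    simp only [map_mul, map_inv, FreeGroup.lift_apply_of]
    rw [raagGen_comm h]
    group
  let j : RAAG Δ' →* RAAG Δ := PresentedGroup.toGroup jrel
  have hj : ∀ u : W, j (raagGen Δ' u) = raagGen Δ (u : V) := fun u =>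
    PresentedGroup.toGroup.of jrel
  have hx : ∀ a : L, raagGen Δ v * j ↑a = j ((MulEquiv.refl L a : L) : RAAG Δ') * raagGen Δ v := by
    rintro ⟨a, ha⟩
    simp only [MulEquiv.refl_apply]
    induction ha using Subgroup.closure_induction with
    | mem x hx =>
      obtain ⟨u, hu, rfl⟩ := hx
      rw [hj]
      exact raagGen_comm hu
    | one => simp
    | mul x y hx hy ihx ihy =>
      rw [map_mul]
      exact Commute.mul_right ihx ihy
    | inv x hx ih =>
      rw [map_inv]
      exact Commute.inv_right ih
  let g : HNNExtension (RAAG Δ') L L (MulEquiv.refl L) →* RAAG Δ :=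
    HNNExtension.lift j (raagGen Δ v) hx
  -- forward map
  let fmap : V → HNNExtension (RAAG Δ') L L (MulEquiv.refl L) := fun u =>
    if h : u ∈ W then HNNExtension.of (raagGen Δ' ⟨u, h⟩) else HNNExtension.t
  have hmemW : ∀ {u : V}, u ≠ v → u ∈ W := fun h => by simpa [hW] using h
  have hvW : v ∉ W := by simp [hW]
  have hcomm : ∀ (a : W), Δ.Adj v (a : V) →
      HNNExtension.t * HNNExtension.of (raagGen Δ' a) =
        (HNNExtension.of (raagGen Δ' a) : HNNExtension (RAAG Δ') L L (MulEquiv.refl L)) *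
          HNNExtension.t := by
    intro a ha
    have hmem : raagGen Δ' a ∈ L := Subgroup.subset_closure ⟨a, ha, rfl⟩
    simpa using HNNExtension.t_mul_of (φ := MulEquiv.refl L) ⟨raagGen Δ' a, hmem⟩
  have frel : ∀ r ∈ raagRels Δ, FreeGroup.lift fmap r = 1 := by
    rintro r ⟨a, b, hab, rfl⟩
    simp only [map_mul, map_inv, FreeGroup.lift_apply_of]
    by_cases hav : a = v
    · rw [hav] at hab ⊢
      have hbv : b ≠ v := fun h => Δ.irrefl (h ▸ hab)
      have hbW := hmemW hbv
      simp only [fmap, dif_neg hvW, dif_pos hbW]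
      rw [hcomm ⟨b, hbW⟩ hab]
      group
    · have haW := hmemW hav
      by_cases hbv : b = v
      · rw [hbv] at hab ⊢
        simp only [fmap, dif_neg hvW, dif_pos haW]
        rw [← hcomm ⟨a, haW⟩ (Δ.adj_symm hab)]
        group
      · have hbW := hmemW hbv
        simp only [fmap, dif_pos haW, dif_pos hbW]
        have hadj : Δ'.Adj ⟨a, haW⟩ ⟨b, hbW⟩ := hab
        rw [← map_inv, ← map_inv, ← map_mul, ← map_mul, ← map_mul, raagGen_comm hadj]
        group
        exact map_one _
  let f : RAAG Δ →* HNNExtension (RAAG Δ') L L (MulEquiv.refl L) := PresentedGroup.toGroup frel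
  have hf : ∀ u : V, f (raagGen Δ u) = fmap u := fun u => PresentedGroup.toGroup.of frel
  have hgf : g.comp f = MonoidHom.id _ := by
    apply PresentedGroup.ext
    intro u
    show g (f (raagGen Δ u)) = raagGen Δ u
    rw [hf]
    by_cases hu : u = v
    · subst hu
      simp only [fmap, dif_neg hvW]
      simp [g]
    · have huW := hmemW hu
      simp only [fmap, dif_pos huW]
      simp [g, hj]
  have hfg : f.comp g = MonoidHom.id _ := by
    apply HNNExtension.hom_ext
    · apply PresentedGroup.ext
      intro u
      show f (g (HNNExtension.of (raagGen Δ' u))) = HNNExtension.of (raagGen Δ' u)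
      rw [show g (HNNExtension.of (raagGen Δ' u)) = j (raagGen Δ' u) from
        HNNExtension.lift_of _ _ _ _, hj, hf]
      simp only [fmap, dif_pos u.2]
    · show f (g HNNExtension.t) = HNNExtension.t
      rw [show g HNNExtension.t = raagGen Δ v from HNNExtension.lift_t _ _ _, hf]
      simp [fmap, dif_neg hvW]
  exact ⟨MonoidHom.toMulEquiv f g hgf hfg⟩
end

section
/- Let Λ be a finite simple graph with vertex set V and let e_1, …, e_m (m ≥ 2) be distinct vertices of Λ such that e_j and e_{j+1} are non-adjacent in Λ for 1 ≤ j ≤ m−1, and e_m and e_1 are non-adjacent in Λ. Let g be an element of the subgroup of G(Λ) generated by the generators corresponding to vertices in V ∖ {e_1,…,e_m}. If the element e_2 e_3 ⋯ e_m g e_m^{-1} ⋯ e_3^{-1} e_2^{-1} of G(Λ) lies in the subgroup generated by the generators corresponding to link(e_1) (the set of neighbors of e_1 in Λ), then e_1 e_2 ⋯ e_m g e_m^{-1} ⋯ e_2^{-1} e_1^{-1} = g in G(Λ). -/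
/-!
Deleting a vertex `v` exhibits `G(Λ)` as an HNN extension of `G(Λ ∖ v)` with stable letter `v`,
acting trivially on the subgroup generated by the link of `v`. By Britton's lemma, if `x` and
`v x v⁻¹` both avoid `v`, then `x` lies in the link subgroup, hence commutes with `v`.

Pinching repeatedly: `e₂ (e₃ ⋯ eₘ g (e₃ ⋯ eₘ)⁻¹) e₂⁻¹` lies in the link of `e₁`, which avoids
`e₂`, so `e₃ ⋯ eₘ g (e₃ ⋯ eₘ)⁻¹` commutes with `e₂` and lies in the link of `e₂`, which avoids
`e₃`; continuing along the chain, `e₂ ⋯ eₘ` conjugates `g` to itself. Then `g` lies in the link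
of `e₁` and commutes with `e₁`.
-/

open Subgroup

namespace HNNExtension

variable {G : Type*} [Group G] {A B : Subgroup G} {φ : A ≃* B}

/-- Britton's lemma for the word `t x t⁻¹`, which is reduced unless `x ∈ A`. -/
theorem mem_of_t_mul_of_mul_inv_t_mem_range {x : G}
    (h : t * of x * t⁻¹ ∈ (of : G →* HNNExtension G A B φ).range) : x ∈ A := by
  by_contra hx
  let w : NormalWord.ReducedWord G A B :=
    ⟨1, [(1, x), (-1, 1)], by simpa [NormalWord.ReducedWord] using hx⟩
  have hw : w.prod φ = t * of x * t⁻¹ := by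
    simp [w, NormalWord.ReducedWord.prod, mul_assoc]
  simpa [w] using ReducedWord.toList_eq_nil_of_mem_of_range φ w (hw ▸ h)

end HNNExtension

section Lift

variable {V : Type*} {Λ : SimpleGraph V} {H : Type*} [Group H]

def raagLift (f : V → H) (hf : ∀ ⦃a b⦄, Λ.Adj a b → Commute (f a) (f b)) : RAAG Λ →* H :=
  PresentedGroup.toGroup (by
    rintro r ⟨a, b, hab, rfl⟩
    simpa [commutatorElement_def] using commutatorElement_eq_one_iff_commute.2 (hf hab))

@[simp]
theorem raagLift_raagGen (f : V → H) (hf : ∀ ⦃a b⦄, Λ.Adj a b → Commute (f a) (f b)) (v : V) :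
    raagLift f hf (raagGen Λ v) = f v :=
  PresentedGroup.toGroup.of _

theorem raag_hom_ext {φ ψ : RAAG Λ →* H} (h : ∀ v, φ (raagGen Λ v) = ψ (raagGen Λ v)) :
    φ = ψ :=
  PresentedGroup.ext h

end Lift

section Generators

variable {V : Type*} (Λ : SimpleGraph V)

theorem commute_raagGen_of_adj {a b : V} (h : Λ.Adj a b) :
    Commute (raagGen Λ a) (raagGen Λ b) := by
  rw [← commutatorElement_eq_one_iff_commute, commutatorElement_def]
  exact (QuotientGroup.eq_one_iff _).2 (subset_normalClosure ⟨a, b, h, rfl⟩)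

theorem commute_raagGen_of_mem_closure_link {v : V} {x : RAAG Λ}
    (hx : x ∈ closure (raagGen Λ '' {u | Λ.Adj v u})) : Commute (raagGen Λ v) x := by
  have hv : raagGen Λ v ∈ centralizer (closure (raagGen Λ '' {u | Λ.Adj v u})) := by
    rw [centralizer_closure, mem_centralizer_iff]
    rintro _ ⟨u, hu, rfl⟩
    exact (commute_raagGen_of_adj Λ hu).symm.eq
  exact (mem_centralizer_iff.1 hv x hx).symm

def raagInclusion (S : Set V) : RAAG (Λ.induce S) →* RAAG Λ :=
  raagLift (fun u => raagGen Λ u.1) fun _ _ h => commute_raagGen_of_adj Λ h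

@[simp]
theorem raagInclusion_raagGen (S : Set V) (u : S) :
    raagInclusion Λ S (raagGen (Λ.induce S) u) = raagGen Λ u :=
  raagLift_raagGen _ _ _

theorem raagInclusion_map_closure (S : Set V) (T : Set S) :
    (closure (raagGen (Λ.induce S) '' T)).map (raagInclusion Λ S) =
      closure (raagGen Λ '' (Subtype.val '' T)) := by
  rw [MonoidHom.map_closure, Set.image_image, Set.image_image]
  simp only [raagInclusion_raagGen]

theorem raagInclusion_range (S : Set V) :
    (raagInclusion Λ S).range = closure (raagGen Λ '' S) := by
  have h := raagInclusion_map_closure Λ S Set.univ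
  rw [Set.image_univ, Set.image_univ, Subtype.range_coe] at h
  rwa [MonoidHom.range_eq_map, ← PresentedGroup.closure_range_of]

end Generators

section LinkHNN

open HNNExtension

variable {V : Type*} (Λ : SimpleGraph V) (v : V)

def linkSubgroup : Subgroup (RAAG (Λ.induce {u | u ≠ v})) :=
  closure (raagGen _ '' {u | Λ.Adj v u})

abbrev LinkHNN : Type _ :=
  HNNExtension (RAAG (Λ.induce {u | u ≠ v})) (linkSubgroup Λ v) (linkSubgroup Λ v)
    (MulEquiv.refl _)

theorem commute_t_of_mem_linkSubgroup {x : RAAG (Λ.induce {u | u ≠ v})}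
    (hx : x ∈ linkSubgroup Λ v) : Commute (t : LinkHNN Λ v) (of x) :=
  t_mul_of ⟨x, hx⟩

open Classical in
noncomputable def raagToLinkHNN : RAAG Λ →* LinkHNN Λ v :=
  raagLift (fun u => if h : u = v then t else of (raagGen _ ⟨u, h⟩)) (by
    intro a b hab
    have link_mem {c : V} (hc : Λ.Adj v c) (hcv : c ≠ v) :
        raagGen _ ⟨c, hcv⟩ ∈ linkSubgroup Λ v :=
      subset_closure ⟨⟨c, hcv⟩, hc, rfl⟩
    by_cases ha : a = v <;> by_cases hb : b = v
    · exact absurd (ha.trans hb.symm) hab.ne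
    · subst ha
      simpa [hb] using commute_t_of_mem_linkSubgroup Λ a (link_mem hab hb)
    · subst hb
      simpa [ha] using (commute_t_of_mem_linkSubgroup Λ b (link_mem hab.symm ha)).symm
    · simpa [ha, hb] using
        (commute_raagGen_of_adj _ (show (Λ.induce {u | u ≠ v}).Adj ⟨a, ha⟩ ⟨b, hb⟩ from hab)).map
          (of : _ →* LinkHNN Λ v))

theorem raagToLinkHNN_raagGen_self : raagToLinkHNN Λ v (raagGen Λ v) = t := by
  simp [raagToLinkHNN]

theorem raagToLinkHNN_comp_raagInclusion :
    (raagToLinkHNN Λ v).comp (raagInclusion Λ {u | u ≠ v}) = of :=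
  raag_hom_ext fun u => by simp [raagToLinkHNN, show (u : V) ≠ v from u.2]

theorem mem_closure_link_of_conj_mem_closure_ne {x : RAAG Λ}
    (hx : x ∈ closure (raagGen Λ '' {u | u ≠ v}))
    (hconj : raagGen Λ v * x * (raagGen Λ v)⁻¹ ∈ closure (raagGen Λ '' {u | u ≠ v})) :
    x ∈ closure (raagGen Λ '' {u | Λ.Adj v u}) := by
  rw [← raagInclusion_range] at hx hconj
  obtain ⟨x, rfl⟩ := hx
  obtain ⟨y, hy⟩ := hconj
  have hincl (z) : raagToLinkHNN Λ v (raagInclusion Λ _ z) = of z :=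
    DFunLike.congr_fun (raagToLinkHNN_comp_raagInclusion Λ v) z
  have hx : x ∈ linkSubgroup Λ v := by
    refine mem_of_t_mul_of_mul_inv_t_mem_range (φ := MulEquiv.refl _) ⟨y, ?_⟩
    simpa [hincl, raagToLinkHNN_raagGen_self] using congrArg (raagToLinkHNN Λ v) hy
  have := mem_map_of_mem (raagInclusion Λ _) hx
  rw [linkSubgroup, raagInclusion_map_closure] at this
  exact closure_mono (Set.image_mono (by rintro _ ⟨u, hu, rfl⟩; exact hu)) this

end LinkHNN

section Chain

variable {V : Type*} (Λ : SimpleGraph V)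

theorem conj_list_prod_eq_self_of_isChain {v : V} {l : List V}
    (hchain : (v :: l).IsChain (fun a b => ¬ Λ.Adj a b)) (hl : l.Nodup) {g : RAAG Λ}
    (hg : g ∈ closure (raagGen Λ '' {u | u ∉ l}))
    (hconj : (l.map (raagGen Λ)).prod * g * (l.map (raagGen Λ)).prod⁻¹ ∈
      closure (raagGen Λ '' {u | Λ.Adj v u})) :
    (l.map (raagGen Λ)).prod * g * (l.map (raagGen Λ)).prod⁻¹ = g := by
  induction l generalizing v with
  | nil => simp
  | cons b l ih =>
    obtain ⟨hvb, hchain⟩ := List.isChain_cons_cons.1 hchain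
    obtain ⟨hbl, hl⟩ := List.nodup_cons.1 hl
    set x := (l.map (raagGen Λ)).prod * g * (l.map (raagGen Λ)).prod⁻¹
    have hconj_eq : ((b :: l).map (raagGen Λ)).prod * g * ((b :: l).map (raagGen Λ)).prod⁻¹ =
        raagGen Λ b * x * (raagGen Λ b)⁻¹ := by
      simp only [x, List.map_cons, List.prod_cons]
      group
    rw [hconj_eq] at hconj ⊢
    have hx : x ∈ closure (raagGen Λ '' {u | u ≠ b}) := by
      have hl_mem : (l.map (raagGen Λ)).prod ∈ closure (raagGen Λ '' {u | u ≠ b}) :=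
        list_prod_mem (by
          simp only [List.mem_map, forall_exists_index, and_imp, forall_apply_eq_imp_iff₂]
          exact fun u hu => subset_closure ⟨u, fun hub => hbl (hub ▸ hu), rfl⟩)
      have hg_mem : g ∈ closure (raagGen Λ '' {u | u ≠ b}) :=
        closure_mono (Set.image_mono (by intro u hu hub; exact hu (hub ▸ List.mem_cons_self))) hg
      exact mul_mem (mul_mem hl_mem hg_mem) (inv_mem hl_mem)
    have hbx : raagGen Λ b * x * (raagGen Λ b)⁻¹ ∈ closure (raagGen Λ '' {u | u ≠ b}) :=
      closure_mono (Set.image_mono (by intro u hu hub; exact hvb (hub ▸ hu))) hconj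
    have hx_link := mem_closure_link_of_conj_mem_closure_ne Λ b hx hbx
    rw [(commute_raagGen_of_mem_closure_link Λ hx_link).eq, mul_inv_cancel_right]
    exact ih hchain hl
      (closure_mono (Set.image_mono (by intro u hu hul; exact hu (List.mem_cons_of_mem b hul))) hg)
      hx_link

end Chain

/-- Let `e 0, …, e (m-1)` be distinct vertices of `Λ`, consecutively
non-adjacent (cyclically), and let `g` lie in the subgroup generated by the generators
of the remaining vertices. If `e 1 ⋯ e (m-1) · g · (e 1 ⋯ e (m-1))⁻¹` lies in the
subgroup generated by the link of `e 0`, then `e 0 e 1 ⋯ e (m-1)` conjugates `g`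
to itself. -/
theorem raag_pinch_propagates {V : Type*} (Λ : SimpleGraph V)
    (m : ℕ) (hm : 2 ≤ m) (e : Fin m → V) (he : Function.Injective e)
    (hnonadj : ∀ j : Fin m, ∀ hj : (j : ℕ) + 1 < m, ¬ Λ.Adj (e j) (e ⟨(j : ℕ) + 1, hj⟩))
    (g : RAAG Λ)
    (hg : g ∈ Subgroup.closure (raagGen Λ '' {u : V | u ∉ Set.range e}))
    (w₂ : RAAG Λ)
    (hw₂ : w₂ = (List.ofFn fun j : Fin (m - 1) =>
      raagGen Λ (e ⟨(j : ℕ) + 1, by have := j.isLt; omega⟩)).prod)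
    (hpinch : w₂ * g * w₂⁻¹ ∈
      Subgroup.closure (raagGen Λ '' {u : V | Λ.Adj (e ⟨0, by omega⟩) u})) :
    (raagGen Λ (e ⟨0, by omega⟩) * w₂) * g * (raagGen Λ (e ⟨0, by omega⟩) * w₂)⁻¹ = g := by
  obtain ⟨n, rfl⟩ : ∃ n, m = n + 1 := ⟨m - 1, by omega⟩
  set l := List.ofFn fun j : Fin n => e j.succ
  have hw : w₂ = (l.map (raagGen Λ)).prod := by
    rw [hw₂, List.map_ofFn]
    rfl
  have hel : List.ofFn e = e ⟨0, by omega⟩ :: l := List.ofFn_succ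
  have hchain : (e ⟨0, by omega⟩ :: l).IsChain (fun a b => ¬ Λ.Adj a b) :=
    hel ▸ List.isChain_ofFn.2 fun i hi => hnonadj ⟨i, by omega⟩ hi
  have hl : l.Nodup := (List.nodup_cons.1 (hel ▸ List.nodup_ofFn.2 he)).2
  have hg' : g ∈ closure (raagGen Λ '' {u | u ∉ l}) := by
    refine closure_mono (Set.image_mono ?_) hg
    intro u hu hul
    exact hu (List.mem_ofFn.1 (hel ▸ List.mem_cons_of_mem _ hul))
  have hconj : w₂ * g * w₂⁻¹ = g := by
    rw [hw] at hpinch ⊢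
    exact conj_list_prod_eq_self_of_isChain Λ hchain hl hg' hpinch
  have hcomm := commute_raagGen_of_mem_closure_link Λ (hconj ▸ hpinch)
  calc _ = raagGen Λ (e ⟨0, by omega⟩) * (w₂ * g * w₂⁻¹) * (raagGen Λ (e ⟨0, by omega⟩))⁻¹ := by
        group
    _ = g := by rw [hconj, hcomm.eq, mul_inv_cancel_right]
end
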